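/- arXiv:1803.02767 — 2 statements merged into one kernel-verified Lean document; each statement's English description precedes it below -/
import Mathlib

section
/- For every r ∈ [0,1) and every integer n ≥ 1 there is no function v ∈ Ĥ_0 such that μ_n(r)·𝔅_r(v')(t) − v(t) = −cos(nt) for almost every t ∈ (−π,π). (This is the transversality condition used to verify the Crandall–Rabinowitz hypothesis (iv).) -/
open MeasureTheory Real Set Filter Topology

noncomputable section

/-- Lebesgue measure restricted to the interval `(-π, π)`. -/
def muPi : Measure ℝ := volume.restrict (Set.Ioo (-Real.pi) Real.pi)

/-- The (unnormalised) `n`-th cosine Fourier coefficient of `f` over `(-π, π)`. -/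
def cosCoef (f : ℝ → ℝ) (n : ℕ) : ℝ := ∫ t in (-Real.pi)..Real.pi, f t * Real.cos (n * t)

/-- The (unnormalised) `n`-th sine Fourier coefficient of `f` over `(-π, π)`. -/
def sinCoef (f : ℝ → ℝ) (n : ℕ) : ℝ := ∫ t in (-Real.pi)..Real.pi, f t * Real.sin (n * t)

/-- The `n`-th Fourier multiplier `(1 + r^(2n))/(1 - r^(2n))` of the operator `𝔅_r`. -/
def brMult (r : ℝ) (n : ℕ) : ℝ := (1 + r ^ (2 * n)) / (1 - r ^ (2 * n))

/-- `IsBr r f g` says that `g` represents (as an element of `L²(-π,π)`) the image `𝔅_r f`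
of `f` under the operator `𝔅_r`, defined by `𝔅_r (cos n t) = ((1+r^(2n))/(1-r^(2n))) sin n t`
for `n ≥ 1`, `𝔅_r (const) = 0` and `𝔅_r (sin n t) = -((1+r^(2n))/(1-r^(2n))) cos n t` for
`n ≥ 1`; an element of `L²(-π,π)` is uniquely determined (a.e.) by its Fourier coefficients. -/
def IsBr (r : ℝ) (f g : ℝ → ℝ) : Prop :=
  MeasureTheory.MemLp g 2 muPi ∧ cosCoef g 0 = 0 ∧
  (∀ n : ℕ, 1 ≤ n → cosCoef g n = -(brMult r n) * sinCoef f n) ∧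
  (∀ n : ℕ, 1 ≤ n → sinCoef g n = brMult r n * cosCoef f n)

/-- `InH0 v v'` says that the pair `(v, v')` is an element of the space `Ĥ₀`: `v` is an even,
`2π`-periodic, absolutely continuous real function whose weak derivative `v'` (also regarded
as `2π`-periodic) belongs to `L²(-π,π)`. -/
def InH0 (v v' : ℝ → ℝ) : Prop :=
  (∀ t, v (-t) = v t) ∧ Function.Periodic v (2 * Real.pi) ∧
  Function.Periodic v' (2 * Real.pi) ∧
  MeasureTheory.MemLp v' 2 muPi ∧
  (∀ a b : ℝ, IntervalIntegrable v' MeasureTheory.volume a b) ∧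
  (∀ a b : ℝ, v b - v a = ∫ t in a..b, v' t)

/-- The characteristic values `μ_n(r) = (1 - r^(2n))/(n (1 + r^(2n)))`. -/
def muN (r : ℝ) (n : ℕ) : ℝ := (1 - r ^ (2 * n)) / (n * (1 + r ^ (2 * n)))

/-- The `Ĥ₀`-norm of a pair `(v, v')`. -/
def H0norm (v v' : ℝ → ℝ) : ℝ := Real.sqrt (∫ t in (-Real.pi)..Real.pi, (v t) ^ 2 + (v' t) ^ 2)

/-! Pair the equation with `cos (n t)`. Integrating by parts, the `n`-th sine coefficient of
`v'` is `-n` times the `n`-th cosine coefficient `c` of `v`, so the `n`-th cosine coefficient of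
`𝔅_r(v')` is `n (1 + r^(2n))/(1 - r^(2n)) c` and that of `μ_n(r) 𝔅_r(v') - v` is `c - c = 0`,
whereas that of `-cos (n t)` is `-π`. -/

theorem integral_mul_deriv_eq_deriv_mul_of_primitive {u v v' : ℝ → ℝ} {a b : ℝ}
    (hu : AbsolutelyContinuousOnInterval u a b) (hv' : IntervalIntegrable v' volume a b)
    (hv : ∀ x, v x = v a + ∫ t in a..x, v' t) :
    ∫ x in a..b, u x * v' x = u b * v b - u a * v a - ∫ x in a..b, deriv u x * v x := by
  have hv_ac : AbsolutelyContinuousOnInterval v a b := by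
    rw [funext hv]
    exact (contDiffOn_const (c := v a)).absolutelyContinuousOnInterval.add
      (hv'.absolutelyContinuousOnInterval_intervalIntegral left_mem_uIcc)
  have hderiv : ∀ᵐ x, x ∈ uIoc a b → u x * v' x = u x * deriv v x := by
    filter_upwards [hv'.ae_hasDerivAt_integral] with x hx hxI
    have hvx : HasDerivAt v (v' x) x := by
      rw [funext hv]
      exact (hx (uIoc_subset_uIcc hxI) a left_mem_uIcc).const_add (v a)
    rw [hvx.deriv]
  rw [intervalIntegral.integral_congr_ae hderiv, hu.integral_mul_deriv_eq_deriv_mul hv_ac]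

lemma intervalIntegral_eq_integral_muPi (f : ℝ → ℝ) :
    ∫ t in (-π)..π, f t = ∫ t, f t ∂muPi := by
  rw [intervalIntegral.integral_of_le (neg_le_self pi_pos.le), integral_Ioc_eq_integral_Ioo]
  rfl

lemma MeasureTheory.MemLp.intervalIntegrable_of_restrict_Ioo {E : Type*} [NormedAddCommGroup E]
    {f : ℝ → E} {p : ENNReal} {a b : ℝ} (hab : a ≤ b) (hp : 1 ≤ p)
    (hf : MemLp f p (volume.restrict (Ioo a b))) : IntervalIntegrable f volume a b := by
  rw [intervalIntegrable_iff_integrableOn_Ioo_of_le hab]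
  exact hf.integrable hp

section FourierCoefficients

variable {f g : ℝ → ℝ} {n : ℕ}

lemma cosCoef_congr_ae (h : f =ᵐ[muPi] g) : cosCoef f n = cosCoef g n := by
  simp only [cosCoef, intervalIntegral_eq_integral_muPi]
  exact integral_congr_ae (h.mul (ae_of_all _ fun _ => rfl))

lemma cosCoef_const_mul (c : ℝ) : cosCoef (fun t => c * f t) n = c * cosCoef f n := by
  simp only [cosCoef, mul_assoc, intervalIntegral.integral_const_mul]

lemma cosCoef_neg : cosCoef (fun t => -f t) n = -cosCoef f n := by
  simp only [cosCoef, neg_mul, intervalIntegral.integral_neg]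

lemma cosCoef_sub (hf : IntervalIntegrable f volume (-π) π)
    (hg : IntervalIntegrable g volume (-π) π) :
    cosCoef (fun t => f t - g t) n = cosCoef f n - cosCoef g n := by
  have hcos : ContinuousOn (fun t : ℝ => cos (n * t)) (uIcc (-π) π) := by fun_prop
  simp only [cosCoef, sub_mul]
  exact intervalIntegral.integral_sub (hf.mul_continuousOn hcos) (hg.mul_continuousOn hcos)

lemma cosCoef_cos_self (hn : n ≠ 0) : cosCoef (fun t => cos (n * t)) n = π := by
  have hn' : (n : ℝ) ≠ 0 := Nat.cast_ne_zero.2 hn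
  simp only [cosCoef, ← sq]
  rw [intervalIntegral.integral_comp_mul_left (fun x => cos x ^ 2) hn', integral_cos_sq,
    mul_neg, sin_neg, sin_nat_mul_pi, smul_eq_mul]
  field_simp
  ring

lemma sinCoef_eq_neg_mul_cosCoef_of_eq_primitive {v v' : ℝ → ℝ} (n : ℕ)
    (hv' : IntervalIntegrable v' volume (-π) π) (hv : ∀ x, v x = v (-π) + ∫ t in (-π)..x, v' t) :
    sinCoef v' n = -n * cosCoef v n := by
  have hsin : ContDiff ℝ 1 fun t : ℝ => sin (n * t) := by fun_prop
  have hderiv : deriv (fun t : ℝ => sin (n * t)) = fun t => n * cos (n * t) := by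
    funext t
    simp [mul_comm]
  have := integral_mul_deriv_eq_deriv_mul_of_primitive
    hsin.contDiffOn.absolutelyContinuousOnInterval hv' hv
  simp only [hderiv, mul_neg, sin_neg, sin_nat_mul_pi, zero_mul, neg_zero, sub_zero,
    zero_sub] at this
  simp only [sinCoef, cosCoef, mul_comm (v' _), mul_comm (v _), this, mul_assoc,
    intervalIntegral.integral_const_mul, neg_mul]

end FourierCoefficients

lemma muN_mul_brMult_mul_self {r : ℝ} {n : ℕ} (hr : r ^ (2 * n) ≠ 1) (hn : n ≠ 0) :
    muN r n * (brMult r n * n) = 1 := by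
  have h1 : 1 - r ^ (2 * n) ≠ 0 := sub_ne_zero.2 hr.symm
  have h2 : 1 + r ^ (2 * n) ≠ 0 := by linarith [(even_two_mul n).pow_nonneg r]
  have hn' : (n : ℝ) ≠ 0 := Nat.cast_ne_zero.2 hn
  unfold muN brMult
  field_simp

/-- **Transversality (Crandall–Rabinowitz condition (iv)).** For every `r ∈ [0,1)` and every
integer `n ≥ 1` there is no `v ∈ Ĥ₀` such that
`μ_n(r)·𝔅_r(v')(t) − v(t) = −cos(n t)` for almost every `t ∈ (−π,π)`. -/
theorem babenko_transversality (r : ℝ) (hr : r ∈ Set.Ico (0 : ℝ) 1) (n : ℕ) (hn : 1 ≤ n) :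
    ¬ ∃ v v' g : ℝ → ℝ, InH0 v v' ∧ IsBr r v' g ∧
      ∀ᵐ t ∂muPi, muN r n * g t - v t = -Real.cos (n * t) := by
  rintro ⟨v, v', g, ⟨-, -, -, -, hv'_int, hv_ftc⟩, ⟨hg_L2, -, hg_cos, -⟩, hae⟩
  have hv : ∀ x, v x = v (-π) + ∫ t in (-π)..x, v' t := fun x => by linarith [hv_ftc (-π) x]
  have hv_cont : Continuous v := by
    rw [funext hv]
    exact continuous_const.add (intervalIntegral.continuous_primitive hv'_int _)
  have hcoef : muN r n * cosCoef g n - cosCoef v n = -π := by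
    rw [← cosCoef_const_mul, ← cosCoef_sub
      ((hg_L2.intervalIntegrable_of_restrict_Ioo (neg_le_self pi_pos.le) one_le_two).const_mul _)
      (hv_cont.intervalIntegrable _ _), cosCoef_congr_ae hae, cosCoef_neg,
      cosCoef_cos_self (by omega)]
  have hmult := muN_mul_brMult_mul_self (n := n) (pow_lt_one₀ hr.1 hr.2 (by omega)).ne (by omega)
  rw [hg_cos n hn, sinCoef_eq_neg_mul_cosCoef_of_eq_primitive n (hv'_int _ _) hv] at hcoef
  exact pi_ne_zero (by linear_combination hcoef - cosCoef v n * hmult)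
end
end

section
/- (Conjugation property of 𝔅_r.) Let r ∈ (0,1) and let (c_k)_{k≥1} be real numbers with Σ_{k≥1} |c_k| < ∞. Define F(u) = Σ_{k=1}^∞ c_k (u^k + r^{2k} u^{−k}) for r ≤ |u| ≤ 1. Then F is continuous on the closed annulus {r ≤ |u| ≤ 1}, holomorphic in its interior, its imaginary part vanishes identically on the inner circle {|u| = r}, and for every t ∈ (−π,π) one has Re F(e^{it}) + 𝔅_r(Im F(e^{i·}))(t) = 0; explicitly, Re F(e^{it}) = Σ_{k≥1} c_k (1+r^{2k}) cos(kt), Im F(e^{it}) = Σ_{k≥1} c_k (1−r^{2k}) sin(kt), and 𝔅_r applied to the latter gives −Σ_{k≥1} c_k (1+r^{2k}) cos(kt). -/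
open MeasureTheory Real Set Filter Topology

noncomputable section

/-!
Each term `u ^ k + r ^ (2k) u ^ (-k)` of the series is bounded by `2` on the closed annulus, so
the series converges uniformly there; this gives continuity and, by Weierstrass, holomorphy in
the interior. On the circle `‖u‖ = r` one has `r² / u = conj u`, so each term is
`u ^ k + conj (u ^ k)`, which is real; on the unit circle it is
`(1 + r ^ (2k)) cos kt + i (1 - r ^ (2k)) sin kt`.

If `g` represents `𝔅_r (Im F(e^{i·}))`, integrating the uniformly convergent trigonometric series
term by term and using `brMult r k * (1 - r ^ (2k)) = 1 + r ^ (2k)` shows that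
`g + Σ c_k (1 + r ^ (2k)) cos kt` has all its Fourier coefficients equal to zero. By Parseval's
identity on `(-π, π]` it vanishes almost everywhere.
-/

lemma intervalIntegral_eq_zero_of_odd {f : ℝ → ℝ} (hf : ∀ t, f (-t) = -f t) (a : ℝ) :
    ∫ t in -a..a, f t = 0 := by
  have h := intervalIntegral.integral_comp_neg (a := -a) (b := a) f
  simp only [hf, intervalIntegral.integral_neg, neg_neg] at h
  linarith

lemma cosCoef_eq_zero_of_odd {f : ℝ → ℝ} (hf : ∀ t, f (-t) = -f t) (n : ℕ) : cosCoef f n = 0 :=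
  intervalIntegral_eq_zero_of_odd (fun t => by rw [hf, mul_neg, cos_neg, neg_mul]) π

lemma sinCoef_eq_zero_of_even {f : ℝ → ℝ} (hf : ∀ t, f (-t) = f t) (n : ℕ) : sinCoef f n = 0 :=
  intervalIntegral_eq_zero_of_odd (fun t => by rw [hf, mul_neg, sin_neg, mul_neg]) π

@[simp]
lemma sinCoef_zero (f : ℝ → ℝ) : sinCoef f 0 = 0 := by
  simp [sinCoef]

lemma cosCoef_add {f g : ℝ → ℝ} (hf : IntervalIntegrable f volume (-π) π)
    (hg : IntervalIntegrable g volume (-π) π) (n : ℕ) :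
    cosCoef (f + g) n = cosCoef f n + cosCoef g n := by
  simp only [cosCoef, Pi.add_apply, add_mul]
  exact intervalIntegral.integral_add (hf.mul_continuousOn (by fun_prop))
    (hg.mul_continuousOn (by fun_prop))

lemma sinCoef_add {f g : ℝ → ℝ} (hf : IntervalIntegrable f volume (-π) π)
    (hg : IntervalIntegrable g volume (-π) π) (n : ℕ) :
    sinCoef (f + g) n = sinCoef f n + sinCoef g n := by
  simp only [sinCoef, Pi.add_apply, add_mul]
  exact intervalIntegral.integral_add (hf.mul_continuousOn (by fun_prop))
    (hg.mul_continuousOn (by fun_prop))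

lemma integral_cos_intCast_mul (m : ℤ) :
    ∫ t in -π..π, cos (m * t) = if m = 0 then 2 * π else 0 := by
  split_ifs with hm
  · simp [hm]
    ring
  · have hm' : (m : ℝ) ≠ 0 := Int.cast_ne_zero.mpr hm
    rw [intervalIntegral.integral_comp_mul_left (fun x => cos x) hm', integral_cos, mul_neg,
      sin_neg, sin_int_mul_pi]
    simp

lemma intervalIntegrable_cos_intCast_mul (m : ℤ) :
    IntervalIntegrable (fun t => cos (m * t)) volume (-π) π :=
  (continuous_cos.comp (continuous_const_mul _)).intervalIntegrable _ _

lemma integral_cos_mul_cos (p q : ℕ) (hp : p ≠ 0) :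
    ∫ t in -π..π, cos (p * t) * cos (q * t) = if p = q then π else 0 := by
  have hprod (t : ℝ) : cos (p * t) * cos (q * t) =
      (cos (((p - q : ℤ) : ℝ) * t) + cos (((p + q : ℤ) : ℝ) * t)) / 2 := by
    push_cast
    rw [sub_mul, add_mul, cos_sub, cos_add]
    ring
  simp_rw [hprod]
  rw [intervalIntegral.integral_div, intervalIntegral.integral_add
    (intervalIntegrable_cos_intCast_mul _) (intervalIntegrable_cos_intCast_mul _),
    integral_cos_intCast_mul, integral_cos_intCast_mul, if_neg (show (p + q : ℤ) ≠ 0 by omega)]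
  by_cases h : p = q <;> simp [h, sub_eq_zero]

lemma integral_sin_mul_sin (p q : ℕ) (hp : p ≠ 0) :
    ∫ t in -π..π, sin (p * t) * sin (q * t) = if p = q then π else 0 := by
  have hprod (t : ℝ) : sin (p * t) * sin (q * t) =
      (cos (((p - q : ℤ) : ℝ) * t) - cos (((p + q : ℤ) : ℝ) * t)) / 2 := by
    push_cast
    rw [sub_mul, add_mul, cos_sub, cos_add]
    ring
  simp_rw [hprod]
  rw [intervalIntegral.integral_div, intervalIntegral.integral_sub
    (intervalIntegrable_cos_intCast_mul _) (intervalIntegrable_cos_intCast_mul _),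
    integral_cos_intCast_mul, integral_cos_intCast_mul, if_neg (show (p + q : ℤ) ≠ 0 by omega)]
  by_cases h : p = q <;> simp [h, sub_eq_zero]

lemma muPi_eq_restrict_Ioc : muPi = volume.restrict (Ioc (-π) π) :=
  Measure.restrict_congr_set Ioo_ae_eq_Ioc

instance : IsFiniteMeasure muPi := by
  rw [muPi]
  infer_instance

lemma MeasureTheory.MemLp.intervalIntegrable_muPi {f : ℝ → ℝ} {p : ENNReal} (hp : 1 ≤ p)
    (hf : MemLp f p muPi) :
    IntervalIntegrable f volume (-π) π := by
  rw [intervalIntegrable_iff_integrableOn_Ioc_of_le (by linarith [pi_pos]), IntegrableOn,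
    ← muPi_eq_restrict_Ioc]
  exact hf.integrable hp

lemma intervalIntegral_mul_cos_intCast_eq_zero {φ : ℝ → ℝ} (hcos : ∀ n : ℕ, cosCoef φ n = 0)
    (m : ℤ) : ∫ t in -π..π, φ t * cos (m * t) = 0 := by
  obtain ⟨n, rfl | rfl⟩ := Int.eq_nat_or_neg m <;> simpa [cosCoef] using hcos n

lemma intervalIntegral_mul_sin_intCast_eq_zero {φ : ℝ → ℝ} (hsin : ∀ n : ℕ, sinCoef φ n = 0)
    (m : ℤ) : ∫ t in -π..π, φ t * sin (m * t) = 0 := by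
  obtain ⟨n, rfl | rfl⟩ := Int.eq_nat_or_neg m <;> simpa [sinCoef] using hsin n

lemma fourier_neg_coe_smul_ofReal (φ : ℝ → ℝ) (n : ℤ) (x : ℝ) :
    fourier (-n) (x : AddCircle (π - -π)) • (φ x : ℂ) =
      ((φ x * cos (n * x) : ℝ) : ℂ) - ((φ x * sin (n * x) : ℝ) : ℂ) * Complex.I := by
  have harg : 2 * (π : ℂ) * Complex.I * ((-n : ℤ) : ℂ) * x / ((π - -π : ℝ) : ℂ) =
      ((-(n * x) : ℝ) : ℂ) * Complex.I := by
    have : (π : ℂ) ≠ 0 := Complex.ofReal_ne_zero.mpr pi_ne_zero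
    push_cast
    field_simp
    ring
  rw [fourier_coe_apply, harg, Complex.exp_mul_I, smul_eq_mul, ← Complex.ofReal_cos,
    ← Complex.ofReal_sin, cos_neg, sin_neg]
  push_cast
  ring

lemma fourierCoeffOn_ofReal_eq_zero {φ : ℝ → ℝ} (hφ : IntervalIntegrable φ volume (-π) π)
    (hcos : ∀ n : ℕ, cosCoef φ n = 0) (hsin : ∀ n : ℕ, sinCoef φ n = 0) (hπ : -π < π) (n : ℤ) :
    fourierCoeffOn hπ (fun t => (φ t : ℂ)) n = 0 := by
  have hint (v : ℝ → ℝ) (hv : Continuous v) :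
      IntervalIntegrable (fun t => ((φ t * v t : ℝ) : ℂ)) volume (-π) π :=
    intervalIntegrable_iff.mpr (intervalIntegrable_iff.mp
      (hφ.mul_continuousOn hv.continuousOn)).ofReal
  simp_rw [fourierCoeffOn_eq_integral, fourier_neg_coe_smul_ofReal]
  rw [intervalIntegral.integral_sub (hint _ (by fun_prop)) ((hint _ (by fun_prop)).mul_const _),
    intervalIntegral.integral_mul_const, intervalIntegral.integral_ofReal,
    intervalIntegral.integral_ofReal, intervalIntegral_mul_cos_intCast_eq_zero hcos,
    intervalIntegral_mul_sin_intCast_eq_zero hsin]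
  simp

theorem ae_eq_zero_of_cosCoef_sinCoef_eq_zero {φ : ℝ → ℝ} (hφ : MemLp φ 2 muPi)
    (hcos : ∀ n : ℕ, cosCoef φ n = 0) (hsin : ∀ n : ℕ, sinCoef φ n = 0) : φ =ᵐ[muPi] 0 := by
  have hπ : -π < π := by linarith [pi_pos]
  have hL2 : MemLp (fun t => (φ t : ℂ)) 2 (volume.restrict (Ioc (-π) π)) := by
    rw [← muPi_eq_restrict_Ioc]
    exact hφ.ofReal
  have parseval := hasSum_sq_fourierCoeffOn hπ hL2
  simp only [fourierCoeffOn_ofReal_eq_zero (hφ.intervalIntegrable_muPi one_le_two) hcos hsin,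
    norm_zero, Complex.norm_real, norm_eq_abs, sq_abs, zero_pow two_ne_zero] at parseval
  have hsq : ∫ t in -π..π, φ t ^ 2 = 0 := by
    have := (hasSum_zero.unique parseval).symm
    rwa [smul_eq_zero, or_iff_right (inv_ne_zero (sub_ne_zero.mpr hπ.ne'))] at this
  rw [intervalIntegral.integral_of_le hπ.le, ← muPi_eq_restrict_Ioc,
    integral_eq_zero_iff_of_nonneg (fun t => sq_nonneg _) hφ.integrable_sq] at hsq
  filter_upwards [hsq] with t ht
  simpa using ht

lemma hasSum_intervalIntegral_of_norm_le {E : Type*} [NormedAddCommGroup E] [NormedSpace ℝ E]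
    [CompleteSpace E] {f : ℕ → ℝ → E} {u : ℕ → ℝ} (hu : Summable u)
    (hf : ∀ k, Continuous (f k)) (hfu : ∀ k t, ‖f k t‖ ≤ u k) (a b : ℝ) :
    HasSum (fun k => ∫ t in a..b, f k t) (∫ t in a..b, ∑' k, f k t) :=
  intervalIntegral.hasSum_integral_of_dominated_convergence (fun k _ => u k)
    (fun k => (hf k).aestronglyMeasurable) (fun k => ae_of_all _ fun t _ => hfu k t)
    (ae_of_all _ fun _ _ => hu) intervalIntegrable_const
    (ae_of_all _ fun t _ => (hu.of_norm_bounded (hfu · t)).hasSum)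

def cosSeries (d : ℕ → ℝ) (t : ℝ) : ℝ := ∑' k : ℕ, d k * cos ((k + 1) * t)

def sinSeries (d : ℕ → ℝ) (t : ℝ) : ℝ := ∑' k : ℕ, d k * sin ((k + 1) * t)

section TrigSeries

variable {d : ℕ → ℝ}

lemma norm_mul_le_abs_of_abs_le_one (a : ℝ) {b : ℝ} (hb : |b| ≤ 1) : ‖a * b‖ ≤ |a| := by
  rw [norm_eq_abs, abs_mul]
  exact mul_le_of_le_one_right (abs_nonneg a) hb

lemma continuous_cosSeries (hd : Summable fun k => |d k|) : Continuous (cosSeries d) :=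
  continuous_tsum (fun k => by fun_prop) hd
    fun k t => norm_mul_le_abs_of_abs_le_one _ (abs_cos_le_one _)

lemma continuous_sinSeries (hd : Summable fun k => |d k|) : Continuous (sinSeries d) :=
  continuous_tsum (fun k => by fun_prop) hd
    fun k t => norm_mul_le_abs_of_abs_le_one _ (abs_sin_le_one _)

lemma memLp_cosSeries (hd : Summable fun k => |d k|) (p : ENNReal) : MemLp (cosSeries d) p muPi :=
  MemLp.of_bound (continuous_cosSeries hd).aestronglyMeasurable _ <| ae_of_all _ fun _ =>
    tsum_of_norm_bounded hd.hasSum fun _ => norm_mul_le_abs_of_abs_le_one _ (abs_cos_le_one _)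

lemma cosSeries_neg (d : ℕ → ℝ) (t : ℝ) : cosSeries d (-t) = cosSeries d t := by
  simp [cosSeries]

lemma sinSeries_neg (d : ℕ → ℝ) (t : ℝ) : sinSeries d (-t) = -sinSeries d t := by
  simp [sinSeries, ← tsum_neg]

lemma cosCoef_cosSeries (hd : Summable fun k => |d k|) (n : ℕ) :
    cosCoef (cosSeries d) n = ∑' k, if k + 1 = n then π * d k else 0 := by
  have hterm (k : ℕ) : ∫ t in -π..π, d k * cos ((k + 1) * t) * cos (n * t) =
      if k + 1 = n then π * d k else 0 := by
    simp_rw [mul_assoc, intervalIntegral.integral_const_mul]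
    have := integral_cos_mul_cos (k + 1) n k.succ_ne_zero
    push_cast at this
    rw [this]
    split_ifs <;> ring
  simp_rw [cosCoef, cosSeries, ← tsum_mul_right, ← hterm]
  refine (hasSum_intervalIntegral_of_norm_le hd (fun k => by fun_prop) (fun k t => ?_) _ _
    |>.tsum_eq).symm
  rw [mul_assoc]
  exact norm_mul_le_abs_of_abs_le_one _ (by
    rw [abs_mul]; exact mul_le_one₀ (abs_cos_le_one _) (abs_nonneg _) (abs_cos_le_one _))

lemma sinCoef_sinSeries (hd : Summable fun k => |d k|) (n : ℕ) :
    sinCoef (sinSeries d) n = ∑' k, if k + 1 = n then π * d k else 0 := by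
  have hterm (k : ℕ) : ∫ t in -π..π, d k * sin ((k + 1) * t) * sin (n * t) =
      if k + 1 = n then π * d k else 0 := by
    simp_rw [mul_assoc, intervalIntegral.integral_const_mul]
    have := integral_sin_mul_sin (k + 1) n k.succ_ne_zero
    push_cast at this
    rw [this]
    split_ifs <;> ring
  simp_rw [sinCoef, sinSeries, ← tsum_mul_right, ← hterm]
  refine (hasSum_intervalIntegral_of_norm_le hd (fun k => by fun_prop) (fun k t => ?_) _ _
    |>.tsum_eq).symm
  rw [mul_assoc]
  exact norm_mul_le_abs_of_abs_le_one _ (by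
    rw [abs_mul]; exact mul_le_one₀ (abs_sin_le_one _) (abs_nonneg _) (abs_sin_le_one _))

end TrigSeries

theorem IsBr.ae_eq_neg_cosSeries {r : ℝ} {a b : ℕ → ℝ} {g : ℝ → ℝ}
    (ha : Summable fun k => |a k|) (hb : Summable fun k => |b k|)
    (hab : ∀ k, brMult r (k + 1) * a k = b k) (hg : IsBr r (sinSeries a) g) :
    g =ᵐ[muPi] -cosSeries b := by
  obtain ⟨hgL2, hg0, hgcos, hgsin⟩ := hg
  have hgi : IntervalIntegrable g volume (-π) π := hgL2.intervalIntegrable_muPi one_le_two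
  have hbi : IntervalIntegrable (cosSeries b) volume (-π) π :=
    (continuous_cosSeries hb).intervalIntegrable _ _
  have hcos (n : ℕ) : cosCoef (g + cosSeries b) n = 0 := by
    rw [cosCoef_add hgi hbi]
    rcases n with _ | m
    · simp [hg0, cosCoef_cosSeries hb]
    · simp [hgcos _ m.succ_pos, sinCoef_sinSeries ha, cosCoef_cosSeries hb, ← hab]
      ring
  have hsin (n : ℕ) : sinCoef (g + cosSeries b) n = 0 := by
    rw [sinCoef_add hgi hbi]
    rcases n with _ | m
    · simp
    · rw [hgsin _ m.succ_pos, cosCoef_eq_zero_of_odd (sinSeries_neg a),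
        sinCoef_eq_zero_of_even (cosSeries_neg b)]
      ring
  filter_upwards [ae_eq_zero_of_cosCoef_sinCoef_eq_zero (hgL2.add (memLp_cosSeries hb 2))
    hcos hsin] with t ht
  simp only [Pi.add_apply, Pi.zero_apply] at ht
  simp only [Pi.neg_apply]
  linarith

def annulusMonomial (r : ℝ) (n : ℕ) (u : ℂ) : ℂ := u ^ n + (r : ℂ) ^ (2 * n) * u ^ (-(n : ℤ))

section AnnulusMonomial

variable {r : ℝ} {n : ℕ} {u : ℂ}

lemma norm_annulusMonomial_le (hr : 0 ≤ r) (n : ℕ) (h1 : r ≤ ‖u‖) (h2 : ‖u‖ ≤ 1) :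
    ‖annulusMonomial r n u‖ ≤ 2 := by
  have hpow : ‖u ^ n‖ ≤ 1 := by
    rw [norm_pow]
    exact pow_le_one₀ (norm_nonneg u) h2
  have hinv : ‖(r : ℂ) ^ (2 * n) * u ^ (-(n : ℤ))‖ ≤ 1 := by
    rw [norm_mul, norm_zpow, norm_pow, Complex.norm_real, norm_of_nonneg hr, zpow_neg,
      zpow_natCast, two_mul, pow_add, mul_assoc, ← div_eq_mul_inv, ← div_pow]
    exact mul_le_one₀ (pow_le_one₀ hr (h1.trans h2)) (by positivity)
      (pow_le_one₀ (by positivity) (div_le_one_of_le₀ h1 (norm_nonneg u)))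
  calc ‖annulusMonomial r n u‖ ≤ 1 + 1 := (norm_add_le _ _).trans (add_le_add hpow hinv)
    _ = 2 := one_add_one_eq_two

lemma differentiableOn_annulusMonomial (r : ℝ) (n : ℕ) :
    DifferentiableOn ℂ (annulusMonomial r n) {0}ᶜ := fun _ hu =>
  ((differentiableAt_pow n).add ((differentiableAt_zpow.mpr (Or.inl hu)).const_mul _))
    |>.differentiableWithinAt

lemma annulusMonomial_eq_two_mul_re (hu : ‖u‖ = r) (n : ℕ) :
    annulusMonomial r n u = 2 * (u ^ n).re := by
  have hconj : (r : ℂ) ^ 2 * u⁻¹ = starRingEnd ℂ u := by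
    rcases eq_or_ne u 0 with rfl | hu0
    · simp
    · rw [← hu, ← Complex.mul_conj', mul_comm u, mul_assoc, mul_inv_cancel₀ hu0, mul_one]
  rw [annulusMonomial, zpow_neg, zpow_natCast, pow_mul, ← inv_pow, ← mul_pow, hconj, ← map_pow,
    Complex.add_conj]
  push_cast
  ring

lemma annulusMonomial_exp_mul_I (r : ℝ) (n : ℕ) (t : ℝ) :
    annulusMonomial r n (Complex.exp (t * Complex.I)) =
      ((1 + r ^ (2 * n)) * cos (n * t) : ℝ) +
        ((1 - r ^ (2 * n)) * sin (n * t) : ℝ) * Complex.I := by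
  have hpos : (n : ℂ) * (t * Complex.I) = ((n * t : ℝ) : ℂ) * Complex.I := by push_cast; ring
  have hneg : ((-(n : ℤ) : ℤ) : ℂ) * (t * Complex.I) = ((-(n * t) : ℝ) : ℂ) * Complex.I := by
    push_cast; ring
  rw [annulusMonomial, ← Complex.exp_nat_mul, ← Complex.exp_int_mul, hpos, hneg]
  simp only [Complex.exp_mul_I, ← Complex.ofReal_cos, ← Complex.ofReal_sin, cos_neg, sin_neg]
  push_cast
  ring

end AnnulusMonomial

def annulusSeries (r : ℝ) (c : ℕ → ℝ) (u : ℂ) : ℂ :=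
  ∑' k : ℕ, (c (k + 1) : ℂ) * annulusMonomial r (k + 1) u

section AnnulusSeries

variable {r : ℝ} {c : ℕ → ℝ}

lemma norm_annulusSeries_term_le (hr : 0 ≤ r) (k : ℕ) {u : ℂ} (h1 : r ≤ ‖u‖) (h2 : ‖u‖ ≤ 1) :
    ‖(c (k + 1) : ℂ) * annulusMonomial r (k + 1) u‖ ≤ 2 * |c (k + 1)| := by
  rw [norm_mul, Complex.norm_real, norm_eq_abs, mul_comm]
  exact mul_le_mul_of_nonneg_right (norm_annulusMonomial_le hr _ h1 h2) (abs_nonneg _)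

lemma continuousOn_annulusSeries (hr : 0 < r) (hc : Summable fun k => |c (k + 1)|) :
    ContinuousOn (annulusSeries r c) {u : ℂ | r ≤ ‖u‖ ∧ ‖u‖ ≤ 1} :=
  continuousOn_tsum (fun k => continuousOn_const.mul <|
      (differentiableOn_annulusMonomial r (k + 1)).continuousOn.mono fun _ hu =>
        norm_pos_iff.mp (hr.trans_le hu.1))
    (hc.mul_left 2) fun k _ hu => norm_annulusSeries_term_le hr.le k hu.1 hu.2

lemma differentiableOn_annulusSeries (hr : 0 < r) (hc : Summable fun k => |c (k + 1)|) :
    DifferentiableOn ℂ (annulusSeries r c) {u : ℂ | r < ‖u‖ ∧ ‖u‖ < 1} :=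
  Complex.differentiableOn_tsum_of_summable_norm (hc.mul_left 2)
    (fun k => (differentiableOn_const _).mul <|
      (differentiableOn_annulusMonomial r (k + 1)).mono fun _ hu =>
        norm_pos_iff.mp (hr.trans hu.1))
    ((isOpen_lt continuous_const continuous_norm).inter
      (isOpen_lt continuous_norm continuous_const))
    fun k _ hu => norm_annulusSeries_term_le hr.le k hu.1.le hu.2.le

lemma im_annulusSeries_eq_zero {u : ℂ} (hu : ‖u‖ = r) : (annulusSeries r c u).im = 0 := by
  simp_rw [annulusSeries, annulusMonomial_eq_two_mul_re hu]
  norm_cast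

lemma summable_annulusSeries (hr : 0 ≤ r) (hc : Summable fun k => |c (k + 1)|) {u : ℂ}
    (h1 : r ≤ ‖u‖) (h2 : ‖u‖ ≤ 1) :
    Summable fun k => (c (k + 1) : ℂ) * annulusMonomial r (k + 1) u :=
  (hc.mul_left 2).of_norm_bounded fun k => norm_annulusSeries_term_le hr k h1 h2

lemma re_annulusSeries_exp_mul_I (hr0 : 0 ≤ r) (hr1 : r ≤ 1) (hc : Summable fun k => |c (k + 1)|)
    (t : ℝ) : (annulusSeries r c (Complex.exp (t * Complex.I))).re =
      ∑' k : ℕ, c (k + 1) * (1 + r ^ (2 * (k + 1))) * cos ((k + 1) * t) := by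
  rw [annulusSeries, Complex.re_tsum (summable_annulusSeries hr0 hc
    (by rwa [Complex.norm_exp_ofReal_mul_I]) (Complex.norm_exp_ofReal_mul_I t).le)]
  congr 1 with k
  simp only [annulusMonomial_exp_mul_I, Complex.re_ofReal_mul, Complex.add_re, Complex.ofReal_re,
    Complex.I_re, mul_zero, add_zero]
  push_cast
  ring

lemma im_annulusSeries_exp_mul_I (hr0 : 0 ≤ r) (hr1 : r ≤ 1) (hc : Summable fun k => |c (k + 1)|)
    (t : ℝ) : (annulusSeries r c (Complex.exp (t * Complex.I))).im =
      ∑' k : ℕ, c (k + 1) * (1 - r ^ (2 * (k + 1))) * sin ((k + 1) * t) := by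
  rw [annulusSeries, Complex.im_tsum (summable_annulusSeries hr0 hc
    (by rwa [Complex.norm_exp_ofReal_mul_I]) (Complex.norm_exp_ofReal_mul_I t).le)]
  congr 1 with k
  simp only [annulusMonomial_exp_mul_I, Complex.im_ofReal_mul, Complex.add_im, Complex.ofReal_im,
    Complex.I_im, mul_one, zero_add]
  push_cast
  ring

end AnnulusSeries

lemma summable_abs_mul_of_abs_le {f g : ℕ → ℝ} {C : ℝ} (hf : Summable fun k => |f k|)
    (hg : ∀ k, |g k| ≤ C) : Summable fun k => |f k * g k| :=
  (hf.mul_right C).of_nonneg_of_le (fun _ => abs_nonneg _) fun k => by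
    rw [abs_mul]
    exact mul_le_mul_of_nonneg_left (hg k) (abs_nonneg _)

/-- **Conjugation property of `𝔅_r`.** Let `r ∈ (0,1)` and let `(c_k)_{k≥1}` be absolutely
summable reals. The function `F(u) = Σ_{k≥1} c_k (u^k + r^(2k) u^(−k))` is continuous on the
closed annulus `{r ≤ |u| ≤ 1}`, holomorphic in its interior, has identically vanishing
imaginary part on the inner circle `{|u| = r}`, and satisfies, with
`Re F(e^{it}) = Σ c_k (1+r^(2k)) cos(kt)` and `Im F(e^{it}) = Σ c_k (1−r^(2k)) sin(kt)`,
the conjugation identity `Re F(e^{it}) + 𝔅_r(Im F(e^{i·}))(t) = 0` on `(−π,π)`, the operator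
`𝔅_r` applied to `Im F(e^{i·})` being `−Σ c_k (1+r^(2k)) cos(kt)`. -/
theorem Br_conjugation (r : ℝ) (hr : r ∈ Set.Ioo (0 : ℝ) 1) (c : ℕ → ℝ)
    (hc : Summable (fun k : ℕ => |c (k + 1)|))
    (F : ℂ → ℂ)
    (hF : ∀ u : ℂ, F u = ∑' k : ℕ,
      (c (k + 1) : ℂ) * (u ^ (k + 1) + (r : ℂ) ^ (2 * (k + 1)) * u ^ (-(k + 1 : ℤ)))) :
    ContinuousOn F {u : ℂ | r ≤ ‖u‖ ∧ ‖u‖ ≤ 1} ∧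
    DifferentiableOn ℂ F {u : ℂ | r < ‖u‖ ∧ ‖u‖ < 1} ∧
    (∀ u : ℂ, ‖u‖ = r → (F u).im = 0) ∧
    (∀ t : ℝ, (F (Complex.exp (t * Complex.I))).re =
      ∑' k : ℕ, c (k + 1) * (1 + r ^ (2 * (k + 1))) * Real.cos ((k + 1) * t)) ∧
    (∀ t : ℝ, (F (Complex.exp (t * Complex.I))).im =
      ∑' k : ℕ, c (k + 1) * (1 - r ^ (2 * (k + 1))) * Real.sin ((k + 1) * t)) ∧
    (∀ g : ℝ → ℝ, IsBr r (fun t => (F (Complex.exp (t * Complex.I))).im) g →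
      (∀ᵐ t : ℝ ∂muPi,
        g t = -∑' k : ℕ, c (k + 1) * (1 + r ^ (2 * (k + 1))) * Real.cos ((k + 1) * t)) ∧
      (∀ᵐ t : ℝ ∂muPi, (F (Complex.exp (t * Complex.I))).re + g t = 0)) := by
  obtain ⟨hr0, hr1⟩ := hr
  obtain rfl : F = annulusSeries r c := funext fun u => by rw [hF]; rfl
  have hre := re_annulusSeries_exp_mul_I hr0.le hr1.le hc
  have him := im_annulusSeries_exp_mul_I hr0.le hr1.le hc
  refine ⟨continuousOn_annulusSeries hr0 hc, differentiableOn_annulusSeries hr0 hc,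
    fun u hu => im_annulusSeries_eq_zero hu, hre, him, fun g hg => ?_⟩
  have hpow (k : ℕ) : 0 < r ^ (2 * (k + 1)) ∧ r ^ (2 * (k + 1)) < 1 :=
    ⟨by positivity, pow_lt_one₀ hr0.le hr1 (by omega)⟩
  have hmult (k : ℕ) : brMult r (k + 1) * (c (k + 1) * (1 - r ^ (2 * (k + 1)))) =
      c (k + 1) * (1 + r ^ (2 * (k + 1))) := by
    rw [brMult]
    field_simp [(sub_pos.mpr (hpow k).2).ne']
  rw [funext him] at hg
  have hg' := IsBr.ae_eq_neg_cosSeries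
    (summable_abs_mul_of_abs_le (C := 2) hc fun k =>
      abs_le.mpr ⟨by linarith [hpow k], by linarith [hpow k]⟩)
    (summable_abs_mul_of_abs_le (C := 2) hc fun k =>
      abs_le.mpr ⟨by linarith [hpow k], by linarith [hpow k]⟩)
    hmult hg
  refine ⟨hg', ?_⟩
  filter_upwards [hg'] with t ht
  rw [hre, ht, Pi.neg_apply, cosSeries, add_neg_cancel]
end
end
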